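/- Define the Kronecker coefficients of S_6 by g_{ijk} := (1/720)·Σ_{g ∈ S_6} χ_i(g)·χ_j(g)·χ_k(g) for 1 ≤ i, j, k ≤ 11 (these are nonnegative integers, equal to the multiplicity of V_k in V_i ⊗ V_j), and set f_{S_6} := Σ_{i,j,k=1}^{11} g_{ijk}·x_i·x_j·x_k ∈ ℂ[x_1,...,x_11]. Then the ℂ-linear map from ℂ⊗R(S_6) to M_11(ℂ) sending each element to the matrix of multiplication by it with respect to the basis (χ_1,...,χ_11) is an injective ℂ-algebra homomorphism whose image is exactly the Harrison center Z(f_{S_6}); in particular Z(f_{S_6}) is isomorphic as a ℂ-algebra to ℂ⊗R(S_6). -/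

import Mathlib

noncomputable section HarrisonAux

open FDRep CategoryTheory

abbrev G6 := Equiv.Perm (Fin 6)

lemma G6card : Fintype.card G6 = 720 := by simp [Fintype.card_perm]; rfl

lemma G6card' : Nat.card G6 = 720 := by rw [Nat.card_eq_fintype_card]; exact G6card

instance : Invertible ((Nat.card G6 : ℂ)) := by
  apply invertibleOfNonzero; rw [G6card']; norm_num

instance : Invertible ((Fintype.card G6 : ℂ)) := by
  apply invertibleOfNonzero; rw [G6card]; norm_num

open scoped Classical in
/-- Orthogonality of characters specialized to `G6`. -/
lemma ortho_aux (V W : FDRep ℂ G6) [Simple V] [Simple W] :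
    (1/720 : ℂ) * ∑ g : G6, V.character g * W.character g⁻¹ =
      if Nonempty (V ≅ W) then 1 else 0 := by
  classical
  have h := char_orthonormal (k := ℂ) (G := G6) V W
  rw [G6card'] at h
  rw [show (1/720 : ℂ) = ((720:ℕ):ℂ)⁻¹ by norm_num]
  convert h using 2

/-- every element of `G6` is conjugate to its inverse -/
lemma conj_inv_G6 (g : G6) : IsConj g g⁻¹ := by
  rw [Equiv.Perm.isConj_iff_cycleType_eq, Equiv.Perm.cycleType_inv]

lemma sum_le_one' (m : Multiset ℕ) (h2 : ∀ x ∈ m, 2 ≤ x) (hs : m.sum ≤ 1) : m = 0 := by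
  induction m using Multiset.induction with
  | empty => rfl
  | cons a t ih =>
    exfalso
    have := h2 a (Multiset.mem_cons_self a t)
    have hsum : a + t.sum ≤ 1 := by simpa using hs
    omega

lemma sum_le_two' (m : Multiset ℕ) (h2 : ∀ x ∈ m, 2 ≤ x) (hs : m.sum ≤ 2) :
    m = 0 ∨ m = {2} := by
  induction m using Multiset.induction with
  | empty => left; rfl
  | cons a t ih =>
    have ha := h2 a (Multiset.mem_cons_self a t)
    have hsum : a + t.sum ≤ 2 := by simpa using hs
    have ht0 : t = 0 := sum_le_one' t (fun x hx => h2 x (Multiset.mem_cons_of_mem hx)) (by omega)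
    subst ht0
    have ha2 : a = 2 := by omega
    subst ha2; right; rfl

lemma sum_le_four' (m : Multiset ℕ) (h2 : ∀ x ∈ m, 2 ≤ x) (hs : m.sum ≤ 4) :
    m = 0 ∨ m = {2} ∨ m = {3} ∨ m = {4} ∨ m = {2,2} := by
  induction m using Multiset.induction with
  | empty => left; rfl
  | cons a t ih =>
    have ha := h2 a (Multiset.mem_cons_self a t)
    have hsum : a + t.sum ≤ 4 := by simpa using hs
    rcases sum_le_two' t (fun x hx => h2 x (Multiset.mem_cons_of_mem hx)) (by omega) with rfl | rfl
    · simp only [Multiset.sum_zero] at hsum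
      have : a ≤ 4 := by omega
      interval_cases a <;> simp
    · have hts : ({2} : Multiset ℕ).sum = 2 := rfl
      rw [hts] at hsum
      have ha2 : a = 2 := by omega
      subst ha2
      right; right; right; right; rfl

lemma sum_le_six' (m : Multiset ℕ) (h2 : ∀ x ∈ m, 2 ≤ x) (hs : m.sum ≤ 6) :
    m = 0 ∨ m = {2} ∨ m = {3} ∨ m = {4} ∨ m = {5} ∨ m = {6} ∨ m = {2,2} ∨ m = {2,3}
      ∨ m = {2,4} ∨ m = {3,3} ∨ m = {2,2,2} := by
  induction m using Multiset.induction with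
  | empty => left; rfl
  | cons a t ih =>
    have ha := h2 a (Multiset.mem_cons_self a t)
    have hsum : a + t.sum ≤ 6 := by simpa using hs
    rcases sum_le_four' t (fun x hx => h2 x (Multiset.mem_cons_of_mem hx)) (by omega)
      with rfl | rfl | rfl | rfl | rfl
    · simp only [Multiset.sum_zero] at hsum
      have : a ≤ 6 := by omega
      interval_cases a <;> simp
    · have hts : ({2} : Multiset ℕ).sum = 2 := rfl
      rw [hts] at hsum
      have : a ≤ 4 := by omega
      interval_cases a <;>
        (refine Or.inr (Or.inr (Or.inr (Or.inr (Or.inr (Or.inr ?_))))); decide)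
    · have hts : ({3} : Multiset ℕ).sum = 3 := rfl
      rw [hts] at hsum
      have : a ≤ 3 := by omega
      interval_cases a <;>
        (refine Or.inr (Or.inr (Or.inr (Or.inr (Or.inr (Or.inr (Or.inr ?_)))))); decide)
    · have hts : ({4} : Multiset ℕ).sum = 4 := rfl
      rw [hts] at hsum
      have ha2 : a = 2 := by omega
      subst ha2
      refine Or.inr (Or.inr (Or.inr (Or.inr (Or.inr (Or.inr (Or.inr (Or.inr ?_))))))); decide
    · have hts : ({2,2} : Multiset ℕ).sum = 4 := rfl
      rw [hts] at hsum
      have ha2 : a = 2 := by omega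
      subst ha2
      refine Or.inr (Or.inr (Or.inr (Or.inr (Or.inr (Or.inr (Or.inr (Or.inr ?_))))))); decide

/-- the eleven possible cycle types in `S₆` -/
def S6T : Finset (Multiset ℕ) := {0, {2}, {3}, {4}, {5}, {6}, {2,2}, {2,3}, {2,4}, {3,3}, {2,2,2}}

lemma S6T_card : S6T.card = 11 := by decide

lemma cycleType_mem_S6T (g : G6) : g.cycleType ∈ S6T := by
  have h2 : ∀ x ∈ g.cycleType, 2 ≤ x := fun x hx => Equiv.Perm.two_le_of_mem_cycleType hx
  have hs : g.cycleType.sum ≤ 6 := by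
    rw [Equiv.Perm.sum_cycleType]
    calc g.support.card ≤ Fintype.card (Fin 6) := Finset.card_le_univ _
    _ = 6 := by simp
  rcases sum_le_six' _ h2 hs with h|h|h|h|h|h|h|h|h|h|h <;> rw [h] <;> decide

/-- the submodule of class functions on `G6` -/
def CF : Submodule ℂ (G6 → ℂ) where
  carrier := {f | ∀ h g : G6, f (h * g * h⁻¹) = f g}
  add_mem' := fun hf hg h g => by simp [hf h g, hg h g]
  zero_mem' := fun h g => rfl
  smul_mem' := fun c f hf h g => by simp [hf h g]

lemma CF_factor {f : G6 → ℂ} (hf : f ∈ CF) {g g' : G6}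
    (h : g.cycleType = g'.cycleType) : f g = f g' := by
  obtain ⟨c, hc⟩ := isConj_iff.mp (Equiv.Perm.isConj_iff_cycleType_eq.mpr h)
  rw [← hc]; exact (hf c g).symm

lemma finrank_CF_le : Module.finrank ℂ CF ≤ 11 := by
  classical
  let L : ({m // m ∈ S6T} → ℂ) →ₗ[ℂ] (G6 → ℂ) :=
    { toFun := fun F g => F ⟨g.cycleType, cycleType_mem_S6T g⟩
      map_add' := fun F F' => rfl
      map_smul' := fun c F => rfl }
  have hle : CF ≤ LinearMap.range L := by
    intro f hf
    refine ⟨fun s => if h : ∃ g : G6, g.cycleType = (s : Multiset ℕ) then f h.choose else 0, ?_⟩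
    funext g
    have hex : ∃ g' : G6, g'.cycleType = g.cycleType := ⟨g, rfl⟩
    simp only [L, LinearMap.coe_mk, AddHom.coe_mk, dif_pos hex]
    exact CF_factor hf hex.choose_spec
  calc Module.finrank ℂ CF ≤ Module.finrank ℂ (LinearMap.range L) :=
        Submodule.finrank_mono hle
    _ ≤ Module.finrank ℂ ({m // m ∈ S6T} → ℂ) := LinearMap.finrank_range_le L
    _ = 11 := by
        rw [Module.finrank_fintype_fun_eq_card, Fintype.card_coe, S6T_card]

open CategoryTheory MonoidalCategory Representation in
lemma gk_nat_aux (V₁ V₂ V₃ : FDRep ℂ G6) :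
    ∃ m : ℕ, (1/720 : ℂ) * ∑ g : G6, V₁.character g * V₂.character g * V₃.character g⁻¹
      = (m : ℂ) := by
  refine ⟨Module.finrank ℂ (invariants ((V₁ ⊗ V₂) ⊗ FDRep.of (dual V₃.ρ)).ρ), ?_⟩
  have havg := FDRep.average_char_eq_finrank_invariants ((V₁ ⊗ V₂) ⊗ FDRep.of (dual V₃.ρ))
  rw [G6card'] at havg
  rw [show (1/720 : ℂ) = ((720:ℕ):ℂ)⁻¹ by norm_num, ← havg]
  congr 1
  apply Finset.sum_congr rfl
  intro g _
  have h1 := congrFun (FDRep.char_tensor (V₁ ⊗ V₂) (FDRep.of (dual V₃.ρ))) g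
  have h2 := congrFun (FDRep.char_tensor V₁ V₂) g
  rw [h1, Pi.mul_apply, h2, Pi.mul_apply, FDRep.char_dual]

set_option maxHeartbeats 1000000 in
open MvPolynomial in
lemma pd1 (gk : Fin 11 → Fin 11 → Fin 11 → ℂ) (b : Fin 11) :
    pderiv b (∑ i : Fin 11, ∑ j : Fin 11, ∑ k : Fin 11,
        (C (gk i j k) * X i * X j * X k : MvPolynomial (Fin 11) ℂ)) =
      (∑ j : Fin 11, ∑ k : Fin 11, C (gk b j k) * (X j * X k))
      + (∑ i : Fin 11, ∑ k : Fin 11, C (gk i b k) * (X i * X k))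
      + (∑ i : Fin 11, ∑ j : Fin 11, C (gk i j b) * (X i * X j)) := by
  classical
  have hterm : ∀ i j k : Fin 11, pderiv b (C (gk i j k) * X i * X j * X k : MvPolynomial (Fin 11) ℂ)
      = (if i = b then C (gk i j k) * (X j * X k) else 0)
        + (if j = b then C (gk i j k) * (X i * X k) else 0)
        + (if k = b then C (gk i j k) * (X i * X j) else 0) := by
    intro i j k
    simp only [pderiv_mul, pderiv_C, pderiv_X, Pi.single_apply]
    split_ifs <;> ring
  have hlift2 : ∀ (P : Prop) (_ : Decidable P) (F : Fin 11 → Fin 11 → MvPolynomial (Fin 11) ℂ),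
      (∑ j : Fin 11, ∑ k : Fin 11, (if P then F j k else 0))
        = if P then ∑ j : Fin 11, ∑ k : Fin 11, F j k else 0 := by
    intro P hP F
    split_ifs <;> simp
  have hlift1 : ∀ (P : Prop) (_ : Decidable P) (F : Fin 11 → MvPolynomial (Fin 11) ℂ),
      (∑ k : Fin 11, (if P then F k else 0)) = if P then ∑ k : Fin 11, F k else 0 := by
    intro P hP F
    split_ifs <;> simp
  simp only [map_sum, hterm, Finset.sum_add_distrib]
  congr 1
  congr 1
  · calc ∑ i : Fin 11, ∑ j : Fin 11, ∑ k : Fin 11,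
        (if i = b then C (gk i j k) * (X j * X k) else 0)
        = ∑ i : Fin 11, (if i = b then ∑ j : Fin 11, ∑ k : Fin 11,
            C (gk i j k) * (X j * X k) else 0) :=
          Finset.sum_congr rfl fun i _ => hlift2 _ _ _
      _ = _ := by rw [Finset.sum_ite_eq' Finset.univ b
            (fun i => ∑ j : Fin 11, ∑ k : Fin 11, C (gk i j k) * (X j * X k)),
            if_pos (Finset.mem_univ b)]
  · calc ∑ i : Fin 11, ∑ j : Fin 11, ∑ k : Fin 11,
        (if j = b then C (gk i j k) * (X i * X k) else 0)
        = ∑ i : Fin 11, ∑ j : Fin 11, (if j = b then ∑ k : Fin 11,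
            C (gk i j k) * (X i * X k) else 0) :=
          Finset.sum_congr rfl fun i _ => Finset.sum_congr rfl fun j _ => hlift1 _ _ _
      _ = _ := by
          rw [Finset.sum_congr rfl fun i (_ : i ∈ Finset.univ) =>
            (Finset.sum_ite_eq' Finset.univ b
              (fun j => ∑ k : Fin 11, C (gk i j k) * (X i * X k))).trans
              (if_pos (Finset.mem_univ b))]
  · calc ∑ i : Fin 11, ∑ j : Fin 11, ∑ k : Fin 11,
        (if k = b then C (gk i j k) * (X i * X j) else 0)
        = ∑ i : Fin 11, ∑ j : Fin 11, (if b ∈ Finset.univ then C (gk i j b) * (X i * X j) else 0) :=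
          Finset.sum_congr rfl fun i _ => Finset.sum_congr rfl fun j _ =>
            Finset.sum_ite_eq' Finset.univ b (fun k => C (gk i j k) * (X i * X j))
      _ = _ := by simp

open MvPolynomial in
lemma pd2' (c : Fin 11 → Fin 11 → ℂ) (a : Fin 11) :
    pderiv a (∑ j : Fin 11, ∑ k : Fin 11, (C (c j k) * (X j * X k) : MvPolynomial (Fin 11) ℂ))
      = (∑ k : Fin 11, C (c a k) * X k) + (∑ j : Fin 11, C (c j a) * X j) := by
  classical
  have hterm : ∀ j k : Fin 11, pderiv a (C (c j k) * (X j * X k) : MvPolynomial (Fin 11) ℂ)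
      = (if j = a then C (c j k) * X k else 0) + (if k = a then C (c j k) * X j else 0) := by
    intro j k
    simp only [pderiv_mul, pderiv_C, pderiv_X, Pi.single_apply]
    split_ifs <;> ring
  have hlift1 : ∀ (P : Prop) (_ : Decidable P) (F : Fin 11 → MvPolynomial (Fin 11) ℂ),
      (∑ k : Fin 11, (if P then F k else 0)) = if P then ∑ k : Fin 11, F k else 0 := by
    intro P hP F; split_ifs <;> simp
  simp only [map_sum, hterm, Finset.sum_add_distrib]
  congr 1
  · calc ∑ j : Fin 11, ∑ k : Fin 11, (if j = a then C (c j k) * X k else 0)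
        = ∑ j : Fin 11, (if j = a then ∑ k : Fin 11, C (c j k) * X k else 0) :=
          Finset.sum_congr rfl fun j _ => hlift1 _ _ _
      _ = _ := by
        rw [Finset.sum_ite_eq' Finset.univ a (fun j => ∑ k : Fin 11, C (c j k) * X k),
          if_pos (Finset.mem_univ a)]
  · calc ∑ j : Fin 11, ∑ k : Fin 11, (if k = a then C (c j k) * X j else 0)
        = ∑ j : Fin 11, (if a ∈ Finset.univ then C (c j a) * X j else 0) :=
          Finset.sum_congr rfl fun j _ =>
            Finset.sum_ite_eq' Finset.univ a (fun k => C (c j k) * X j)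
      _ = _ := by simp

open MvPolynomial in
lemma pd2 (gk : Fin 11 → Fin 11 → Fin 11 → ℂ)
    (hsym12 : ∀ i j k, gk i j k = gk j i k) (hsym23 : ∀ i j k, gk i j k = gk i k j)
    (a b : Fin 11) :
    pderiv a (pderiv b (∑ i : Fin 11, ∑ j : Fin 11, ∑ k : Fin 11,
        (C (gk i j k) * X i * X j * X k : MvPolynomial (Fin 11) ℂ)))
      = ∑ d : Fin 11, C (6 * gk a b d) * X d := by
  rw [pd1, map_add, map_add, pd2' (fun j k => gk b j k), pd2' (fun i k => gk i b k),
    pd2' (fun i j => gk i j b)]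
  simp only [← Finset.sum_add_distrib]
  apply Finset.sum_congr rfl
  intro d _
  rw [show gk b a d = gk a b d from (hsym12 a b d).symm,
    show gk b d a = gk a b d from by rw [← hsym23 b a d, ← hsym12 a b d],
    show gk d b a = gk a b d from by rw [hsym12 d b a, ← hsym23 b a d, ← hsym12 a b d],
    show gk a d b = gk a b d from (hsym23 a b d).symm,
    show gk d a b = gk a b d from by rw [hsym12 d a b, ← hsym23 a b d],
    show (6 : ℂ) * gk a b d = gk a b d + gk a b d + gk a b d + gk a b d + gk a b d + gk a b d
      from by ring, map_add, map_add, map_add, map_add, map_add]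
  ring


open MvPolynomial Matrix in
lemma coefext (c c' : Fin 11 → ℂ)
    (h : (∑ d : Fin 11, C (c d) * X d : MvPolynomial (Fin 11) ℂ) = ∑ d, C (c' d) * X d) :
    c = c' := by
  classical
  funext e
  have h2 := congrArg (coeff (Finsupp.single e 1)) h
  have key : ∀ c0 : Fin 11 → ℂ,
      coeff (Finsupp.single e 1) (∑ d : Fin 11, C (c0 d) * X d : MvPolynomial (Fin 11) ℂ)
        = c0 e := by
    intro c0
    rw [coeff_sum]
    have : ∀ d : Fin 11, coeff (Finsupp.single e 1) (C (c0 d) * X d : MvPolynomial (Fin 11) ℂ)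
        = if d = e then c0 d else 0 := by
      intro d
      rw [coeff_C_mul, coeff_X']
      by_cases hde : d = e
      · rw [if_pos hde, if_pos (by rw [hde]), mul_one]
      · rw [if_neg hde, if_neg (fun hc => hde (by
          have := Finsupp.single_left_inj (one_ne_zero (α := ℕ)) |>.mp hc
          exact this)), mul_zero]
    rw [Finset.sum_congr rfl fun d _ => this d,
      Finset.sum_ite_eq' Finset.univ e c0, if_pos (Finset.mem_univ e)]
  rw [key c, key c'] at h2
  exact h2

open MvPolynomial Matrix in
lemma Zcond (gk : Fin 11 → Fin 11 → Fin 11 → ℂ) (M : Matrix (Fin 11) (Fin 11) ℂ)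
    (H : Matrix (Fin 11) (Fin 11) (MvPolynomial (Fin 11) ℂ))
    (hHe : ∀ a b : Fin 11, H a b = ∑ d : Fin 11, C (6 * gk a b d) * X d) :
    ((M.map C)ᵀ * H = H * M.map C) ↔
      ∀ a b d : Fin 11, (∑ c : Fin 11, M c a * gk c b d) = ∑ c : Fin 11, gk a c d * M c b := by
  classical
  have lhs_eq : ∀ a b : Fin 11, ((M.map C)ᵀ * H : Matrix (Fin 11) (Fin 11) (MvPolynomial (Fin 11) ℂ)) a b
      = ∑ d : Fin 11, C (6 * ∑ c : Fin 11, M c a * gk c b d) * X d := by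
    intro a b
    rw [Matrix.mul_apply]
    have step : ∀ c : Fin 11, (M.map C)ᵀ a c * H c b
        = ∑ d : Fin 11, C (M c a * (6 * gk c b d)) * X d := by
      intro c
      rw [Matrix.transpose_apply, Matrix.map_apply, hHe c b, Finset.mul_sum]
      exact Finset.sum_congr rfl fun d _ => by rw [← mul_assoc, ← _root_.map_mul]
    rw [Finset.sum_congr rfl fun c _ => step c, Finset.sum_comm]
    apply Finset.sum_congr rfl
    intro d _
    rw [← Finset.sum_mul, ← map_sum]
    congr 2
    rw [Finset.mul_sum]
    exact Finset.sum_congr rfl fun c _ => by ring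
  have rhs_eq : ∀ a b : Fin 11, (H * M.map C : Matrix (Fin 11) (Fin 11) (MvPolynomial (Fin 11) ℂ)) a b
      = ∑ d : Fin 11, C (6 * ∑ c : Fin 11, gk a c d * M c b) * X d := by
    intro a b
    rw [Matrix.mul_apply]
    have step : ∀ c : Fin 11, H a c * (M.map C) c b
        = ∑ d : Fin 11, C ((6 * gk a c d) * M c b) * X d := by
      intro c
      rw [Matrix.map_apply, hHe a c, Finset.sum_mul]
      refine Finset.sum_congr rfl fun d _ => ?_
      calc C (6 * gk a c d) * X d * C (M c b)
          = C (6 * gk a c d) * C (M c b) * X d := by ring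
        _ = C ((6 * gk a c d) * M c b) * X d := by rw [← _root_.map_mul]
    rw [Finset.sum_congr rfl fun c _ => step c, Finset.sum_comm]
    apply Finset.sum_congr rfl
    intro d _
    rw [← Finset.sum_mul, ← map_sum]
    congr 2
    rw [Finset.mul_sum]
    exact Finset.sum_congr rfl fun c _ => by ring
  constructor
  · intro hM a b d
    have he := congrFun (congrFun hM a) b
    rw [lhs_eq a b, rhs_eq a b] at he
    have h3 := congrFun (coefext _ _ he) d
    exact mul_left_cancel₀ (by norm_num : (6:ℂ) ≠ 0) h3
  · intro hT
    refine Matrix.ext_iff.mp fun a b => ?_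
    rw [lhs_eq a b, rhs_eq a b]
    exact Finset.sum_congr rfl fun d _ => by rw [hT a b d]


end HarrisonAux

open MvPolynomial Matrix in
theorem harrison_center_S6
    (V : Fin 11 → FDRep ℂ (Equiv.Perm (Fin 6)))
    (hsimple : ∀ i, CategoryTheory.Simple (V i))
    (hdistinct : ∀ i j : Fin 11, i ≠ j → (V i).character ≠ (V j).character)
    (htriv : ∀ g, (V 0).character g = 1)
    (hint : ∀ (i : Fin 11) (g : Equiv.Perm (Fin 6)), ∃ z : ℤ, (V i).character g = (z : ℂ)) :
    ∀ gk : Fin 11 → Fin 11 → Fin 11 → ℂ,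
      (∀ i j k, gk i j k = (1 / 720 : ℂ) *
        ∑ g : Equiv.Perm (Fin 6), (V i).character g * (V j).character g * (V k).character g) →
    ∀ f : MvPolynomial (Fin 11) ℂ,
      f = ∑ i : Fin 11, ∑ j : Fin 11, ∑ k : Fin 11, MvPolynomial.C (gk i j k) * X i * X j * X k →
    ∀ H : Matrix (Fin 11) (Fin 11) (MvPolynomial (Fin 11) ℂ),
      H = Matrix.of (fun i j => MvPolynomial.pderiv i (MvPolynomial.pderiv j f)) →
    ∀ Z : Set (Matrix (Fin 11) (Fin 11) ℂ),
      Z = {M : Matrix (Fin 11) (Fin 11) ℂ | (M.map MvPolynomial.C)ᵀ * H = H * M.map MvPolynomial.C} →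
    ∀ A : Set (Equiv.Perm (Fin 6) → ℂ),
      A = (Submodule.span ℂ (Set.range fun i => (V i).character) : Set (Equiv.Perm (Fin 6) → ℂ)) →
    ∀ MulMat : (Equiv.Perm (Fin 6) → ℂ) → Matrix (Fin 11) (Fin 11) ℂ → Prop,
      (∀ a M, MulMat a M ↔ ∀ j : Fin 11, ∀ g : Equiv.Perm (Fin 6),
        a g * (V j).character g = ∑ k : Fin 11, M k j * (V k).character g) →
      -- the Kronecker coefficients are nonnegative integers
      (∀ i j k, ∃ m : ℕ, gk i j k = (m : ℂ))
      -- the multiplication-matrix map is well defined on ℂ⊗R(S₆)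
      ∧ (∀ a ∈ A, ∃! M, MulMat a M)
      -- it is injective
      ∧ (∀ a b : Equiv.Perm (Fin 6) → ℂ, a ∈ A → b ∈ A →
          ∀ M, MulMat a M → MulMat b M → a = b)
      -- it is a ℂ-algebra homomorphism
      ∧ MulMat 1 1
      ∧ (∀ a b Ma Mb, MulMat a Ma → MulMat b Mb →
          MulMat (a + b) (Ma + Mb) ∧ MulMat (a * b) (Ma * Mb))
      ∧ (∀ (c : ℂ) a Ma, MulMat a Ma → MulMat (c • a) (c • Ma))
      -- its image is exactly the Harrison center Z(f_{S₆})
      ∧ (∀ M : Matrix (Fin 11) (Fin 11) ℂ, M ∈ Z ↔ ∃ a ∈ A, MulMat a M) := by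
  classical
  intro gk hgk f hf H hH Z hZ A hA MulMat hMM
  set χ : Fin 11 → (G6 → ℂ) := fun i => (V i).character with hχ
  have hval : ∀ i, (V i).character = χ i := fun i => rfl
  -- characters take the same value on `g` and `g⁻¹`
  have hinv : ∀ (i : Fin 11) (g : G6), χ i g⁻¹ = χ i g := by
    intro i g
    obtain ⟨c, hc⟩ := isConj_iff.mp (conj_inv_G6 g)
    rw [← hc]
    exact FDRep.char_conj (V i) g c
  -- orthogonality with both characters evaluated at `g`
  have horth : ∀ i j : Fin 11,
      (1/720 : ℂ) * ∑ g : G6, χ i g * χ j g = if i = j then 1 else 0 := by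
    intro i j
    haveI := hsimple i; haveI := hsimple j
    have h := ortho_aux (V i) (V j)
    simp only [hval, hinv] at h
    rw [h]
    by_cases hij : i = j
    · subst hij; simp
    · rw [if_neg, if_neg hij]
      rintro ⟨e⟩
      exact hdistinct i j hij (FDRep.char_iso e)
  -- pairing a linear combination with a character extracts the coefficient
  have hpair : ∀ (c : Fin 11 → ℂ) (j : Fin 11),
      (1/720 : ℂ) * ∑ g : G6, (∑ i, c i * χ i g) * χ j g = c j := by
    intro c j
    have h1 : ∑ g : G6, (∑ i, c i * χ i g) * χ j g
        = ∑ i, c i * ∑ g : G6, χ i g * χ j g := by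
      simp only [Finset.sum_mul]
      rw [Finset.sum_comm]
      simp [Finset.mul_sum, mul_assoc]
    rw [h1, Finset.mul_sum]
    have h2 : ∀ i, (1/720 : ℂ) * (c i * ∑ g : G6, χ i g * χ j g)
        = c i * (if i = j then 1 else 0) := by
      intro i
      rw [← horth i j]; ring
    simp only [h2, mul_ite, mul_one, mul_zero]
    simp
  -- each character is a class function
  have hCFχ : ∀ i, χ i ∈ CF := fun i h g => FDRep.char_conj (V i) g h
  -- the characters are linearly independent
  have hli : LinearIndependent ℂ χ := by
    rw [Fintype.linearIndependent_iff]
    intro c hc j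
    have h0 : ∀ g : G6, ∑ i, c i * χ i g = 0 := by
      intro g
      have := congrFun hc g
      simpa using this
    rw [← hpair c j]
    simp only [h0, zero_mul, Finset.sum_const_zero, mul_zero]
  -- span of the characters is the space of class functions
  have hspan : Submodule.span ℂ (Set.range χ) = CF := by
    apply Submodule.eq_of_le_of_finrank_le
    · rw [Submodule.span_le]
      rintro _ ⟨i, rfl⟩
      exact hCFχ i
    · rw [finrank_span_eq_card hli]
      simpa using finrank_CF_le
  -- rewrite gk in terms of χ
  have hgkχ : ∀ i j k, gk i j k
      = (1/720 : ℂ) * ∑ g : G6, χ i g * χ j g * χ k g := by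
    intro i j k; rw [hgk i j k]
  -- the key product decomposition
  have hprod : ∀ (i j : Fin 11) (g : G6), χ i g * χ j g = ∑ k, gk i j k * χ k g := by
    intro i j
    have hmem : (χ i * χ j : G6 → ℂ) ∈ Submodule.span ℂ (Set.range χ) := by
      rw [hspan]
      intro h g
      show χ i (h * g * h⁻¹) * χ j (h * g * h⁻¹) = χ i g * χ j g
      rw [hCFχ i h g, hCFχ j h g]
    obtain ⟨c, hc⟩ := (Submodule.mem_span_range_iff_exists_fun ℂ).mp hmem
    have hck : ∀ k, c k = gk i j k := by
      intro k
      rw [hgkχ i j k, ← hpair c k]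
      congr 1
      apply Finset.sum_congr rfl
      intro g _
      have : ∑ l, c l * χ l g = χ i g * χ j g := by
        have := congrFun hc g
        simpa using this
      rw [this]
    intro g
    have := congrFun hc g
    simp only [Finset.sum_apply, Pi.smul_apply, smul_eq_mul, Pi.mul_apply] at this
    rw [← this]
    apply Finset.sum_congr rfl
    intro k _
    rw [hck k]
  -- δ-property of the coefficients against the trivial character
  have hgk0 : ∀ c e : Fin 11, gk 0 c e = if c = e then 1 else 0 := by
    intro c e
    rw [hgkχ, ← horth c e]
    congr 1
    apply Finset.sum_congr rfl
    intro g _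
    rw [← hval 0, htriv g]
    ring
  -- full symmetry of the coefficients
  have hgksym : ∀ i j k, gk i j k = gk j i k ∧ gk i j k = gk i k j := by
    intro i j k
    constructor <;> rw [hgkχ, hgkχ] <;> congr 1 <;>
      exact Finset.sum_congr rfl fun g _ => by ring
  -- the Kronecker coefficients are dimensions of spaces of invariants
  have gknat : ∀ i j k, ∃ m : ℕ, gk i j k = (m : ℂ) := by
    intro i j k
    obtain ⟨m, hm⟩ := gk_nat_aux (V i) (V j) (V k)
    refine ⟨m, ?_⟩
    rw [hgkχ i j k, ← hm]
    congr 1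
    apply Finset.sum_congr rfl
    intro g _
    rw [hval i, hval j, hval k, hinv k]
  refine ⟨gknat, ?_, ?_, ?_, ?_, ?_, ?_⟩
  · -- well-definedness
    intro a ha
    rw [hA] at ha
    obtain ⟨c, hc⟩ := (Submodule.mem_span_range_iff_exists_fun ℂ).mp ha
    have hcg : ∀ g : G6, a g = ∑ i, c i * χ i g := by
      intro g
      have := congrFun hc g
      simp only [Finset.sum_apply, Pi.smul_apply, smul_eq_mul] at this
      exact this.symm
    have hMa : MulMat a (Matrix.of fun k j => ∑ i, c i * gk i j k) := by
      rw [hMM]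
      intro j g
      simp only [hval]
      rw [hcg g, Finset.sum_mul]
      have h1 : ∀ i, c i * χ i g * χ j g = ∑ k, c i * (gk i j k * χ k g) := by
        intro i
        rw [mul_assoc, hprod i j g, Finset.mul_sum]
      simp only [h1]
      rw [Finset.sum_comm]
      apply Finset.sum_congr rfl
      intro k _
      rw [Matrix.of_apply, Finset.sum_mul]
      apply Finset.sum_congr rfl
      intro i _
      ring
    refine ⟨_, hMa, ?_⟩
    intro M' hM'
    rw [hMM] at hM' hMa
    ext k j
    simp only [hval] at hM' hMa
    have hz : ∀ g : G6, ∑ l, (M' l j - Matrix.of (fun k j => ∑ i, c i * gk i j k) l j) * χ l g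
        = 0 := by
      intro g
      simp only [sub_mul]
      rw [Finset.sum_sub_distrib, ← hM' j g, ← hMa j g, sub_self]
    have := Fintype.linearIndependent_iff.mp hli
      (fun l => M' l j - Matrix.of (fun k j => ∑ i, c i * gk i j k) l j) ?_ k
    · have h := sub_eq_zero.mp this
      exact h
    · funext g
      simp only [Finset.sum_apply, Pi.smul_apply, smul_eq_mul, Pi.zero_apply]
      exact hz g
  · -- injectivity
    intro a b _ _ M hMa hMb
    rw [hMM] at hMa hMb
    funext g
    have h1 := hMa 0 g
    have h2 := hMb 0 g
    rw [htriv g, mul_one] at h1 h2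
    rw [h1, h2]
  · -- unit
    rw [hMM]
    intro j g
    rw [Pi.one_apply, one_mul]
    have h1 : ∀ k : Fin 11, (1 : Matrix (Fin 11) (Fin 11) ℂ) k j * (V k).character g
        = if k = j then (V k).character g else 0 := by
      intro k; rw [Matrix.one_apply, ite_mul, one_mul, zero_mul]
    rw [Finset.sum_congr rfl (fun k _ => h1 k),
      Finset.sum_ite_eq' Finset.univ j (fun k => (V k).character g), if_pos (Finset.mem_univ j)]
  · -- additivity and multiplicativity
    intro a b Ma Mb ha hb
    rw [hMM] at ha hb
    constructor
    · rw [hMM]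
      intro j g
      simp only [Pi.add_apply, Matrix.add_apply, add_mul, Finset.sum_add_distrib]
      rw [ha j g, hb j g]
    · rw [hMM]
      intro j g
      have step1 : (a * b) g * (V j).character g = a g * (b g * (V j).character g) := by
        rw [Pi.mul_apply]; ring
      rw [step1, hb j g, Finset.mul_sum]
      have step2 : ∀ k, a g * (Mb k j * (V k).character g)
          = Mb k j * ∑ l, Ma l k * (V l).character g := by
        intro k
        rw [show a g * (Mb k j * (V k).character g) = Mb k j * (a g * (V k).character g) from by
          ring, ha k g]
      simp only [step2, Finset.mul_sum]
      rw [Finset.sum_comm]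
      apply Finset.sum_congr rfl
      intro l _
      rw [Matrix.mul_apply, Finset.sum_mul]
      apply Finset.sum_congr rfl
      intro k _
      ring
  · -- scalar multiplication
    intro c a Ma ha
    rw [hMM] at ha ⊢
    intro j g
    have : (c • a) g * (V j).character g = c * (a g * (V j).character g) := by
      rw [Pi.smul_apply, smul_eq_mul]; ring
    rw [this, ha j g, Finset.mul_sum]
    apply Finset.sum_congr rfl
    intro k _
    rw [Matrix.smul_apply, smul_eq_mul]
    ring
  · -- the image is the Harrison center
    intro M
    have hHe : ∀ a b : Fin 11, H a b = ∑ d : Fin 11, C (6 * gk a b d) * X d := by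
      intro a b
      rw [hH, Matrix.of_apply, hf]
      exact pd2 gk (fun i j k => (hgksym i j k).1) (fun i j k => (hgksym i j k).2) a b
    rw [hZ, Set.mem_setOf_eq, Zcond gk M H hHe]
    have hswap : ∀ (w : Fin 11 → ℂ) (u v : G6 → ℂ),
        ∑ c : Fin 11, w c * ((1/720 : ℂ) * ∑ g : G6, χ c g * u g * v g)
          = (1/720 : ℂ) * ∑ g : G6, (∑ c : Fin 11, w c * χ c g) * (u g * v g) := by
      intro w u v
      have l1 : ∀ c : Fin 11, w c * ((1/720:ℂ) * ∑ g : G6, χ c g * u g * v g)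
          = ∑ g : G6, (1/720:ℂ) * (w c * χ c g * (u g * v g)) := by
        intro c
        rw [Finset.mul_sum, Finset.mul_sum]
        exact Finset.sum_congr rfl fun g _ => by ring
      rw [Finset.sum_congr rfl fun c _ => l1 c, Finset.sum_comm, Finset.mul_sum]
      apply Finset.sum_congr rfl
      intro g _
      rw [Finset.sum_mul, Finset.mul_sum]
    constructor
    · intro hT
      refine ⟨fun g => ∑ c : Fin 11, M c 0 * χ c g, ?_, ?_⟩
      · rw [hA]
        have : (fun g => ∑ c : Fin 11, M c 0 * χ c g) = ∑ c : Fin 11, M c 0 • χ c := by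
          funext g; simp
        rw [this]
        exact Submodule.sum_mem _ fun c _ =>
          Submodule.smul_mem _ _ (Submodule.subset_span ⟨c, rfl⟩)
      · rw [hMM]
        intro j g
        simp only [hval]
        have h1 : (∑ c : Fin 11, M c 0 * χ c g) * χ j g
            = ∑ c : Fin 11, M c 0 * (χ c g * χ j g) := by
          rw [Finset.sum_mul]; exact Finset.sum_congr rfl fun c _ => by ring
        rw [h1]
        have h2 : ∀ c : Fin 11, M c 0 * (χ c g * χ j g)
            = ∑ e : Fin 11, M c 0 * gk c j e * χ e g := by
          intro c
          rw [hprod c j g, Finset.mul_sum]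
          exact Finset.sum_congr rfl fun e _ => by ring
        rw [Finset.sum_congr rfl fun c _ => h2 c, Finset.sum_comm]
        apply Finset.sum_congr rfl
        intro e _
        rw [← Finset.sum_mul]
        congr 1
        rw [hT 0 j e]
        rw [Finset.sum_congr rfl fun c (_ : c ∈ Finset.univ) => by
          rw [hgk0 c e, ite_mul, one_mul, zero_mul]]
        rw [Finset.sum_ite_eq' Finset.univ e (fun c => M c j), if_pos (Finset.mem_univ e)]
    · rintro ⟨a, _, haM⟩
      rw [hMM] at haM
      simp only [hval] at haM
      intro a' b d
      have hL : ∑ c : Fin 11, M c a' * gk c b d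
          = (1/720 : ℂ) * ∑ g : G6, (∑ c : Fin 11, M c a' * χ c g) * (χ b g * χ d g) := by
        rw [Finset.sum_congr rfl fun c (_ : c ∈ Finset.univ) => by rw [hgkχ c b d]]
        exact hswap (fun c => M c a') (χ b) (χ d)
      have hR : ∑ c : Fin 11, gk a' c d * M c b
          = (1/720 : ℂ) * ∑ g : G6, (∑ c : Fin 11, M c b * χ c g) * (χ a' g * χ d g) := by
        rw [Finset.sum_congr rfl fun c (_ : c ∈ Finset.univ) => by
          rw [show gk a' c d = gk c a' d from hgksym a' c d |>.1, mul_comm]]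
        rw [Finset.sum_congr rfl fun c (_ : c ∈ Finset.univ) => by rw [hgkχ c a' d]]
        exact hswap (fun c => M c b) (χ a') (χ d)
      rw [hL, hR]
      congr 1
      apply Finset.sum_congr rfl
      intro g _
      rw [← haM a' g, ← haM b g]
      ring
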